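/- For every integer l with 1 ≤ l ≤ 5 and every κ > 0 there exists θ₀ ∈ (π/2, π) such that for every θ ∈ (π/2, θ₀] there is a constant c > 0 with: for all τ > 0 satisfying κ·τ·sin θ ≤ π and all z ∈ Γ^τ_{θ,κ}, one has |(γ_l(e^{−zτ})/l!)·τ^{l+1} − z^{−(l+1)}| ≤ c·τ^{l+1}. -/

import Mathlib

/-!
Let `h(w) = 1 / (e^w - 1) - 1 / w`. The zeros of `e^w - 1` lie in `2πiℤ`, so `h` extends
holomorphically to the disc `‖w‖ < 2π` and each derivative `h^(l)` is bounded on every closed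
disc of radius `R < 2π`. Away from `0`, the Euler operator `ξ d/dξ` maps `γ_l` to `γ_(l+1)`
(starting from `γ_0(ξ) = ξ / (1 - ξ)`), which gives
`h^(l)(w) = (-1)^l (γ_l(e^(-w)) - l! / w^(l+1))`.
On `Γ^τ_{θ,κ}` we have `‖zτ‖ ≤ π / sin θ < 2π` as soon as `sin θ > 1/2`, and with `w = zτ`
the error equals `τ^(l+1) / l! * ‖h^(l)(w)‖`.
-/

open Real

/-- Truncated sectorial contour Γ^τ_{θ,κ}. -/
noncomputable def contourTrunc (θ κ τ : ℝ) : Set ℂ :=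
  {z : ℂ | ‖z‖ = κ ∧ |z.arg| ≤ θ} ∪
    {z : ℂ | ∃ r : ℝ, κ ≤ r ∧ r ≤ π / (τ * Real.sin θ) ∧
      (z = (r : ℂ) * Complex.exp (θ * Complex.I) ∨
        z = (r : ℂ) * Complex.exp (-θ * Complex.I))}

/-- γ_l(ξ), the closed forms of ∑_{n≥1} n^l ξ^n for l = 1,…,5. -/
noncomputable def gammaFn : ℕ → ℂ → ℂ
  | 1, ξ => ξ / (1 - ξ) ^ 2
  | 2, ξ => (ξ + ξ ^ 2) / (1 - ξ) ^ 3
  | 3, ξ => (ξ + 4 * ξ ^ 2 + ξ ^ 3) / (1 - ξ) ^ 4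
  | 4, ξ => (ξ + 11 * ξ ^ 2 + 11 * ξ ^ 3 + ξ ^ 4) / (1 - ξ) ^ 5
  | 5, ξ => (ξ + 26 * ξ ^ 2 + 66 * ξ ^ 3 + 26 * ξ ^ 4 + ξ ^ 5) / (1 - ξ) ^ 6
  | _, _ => 0

open Metric
open scoped Nat

noncomputable def gammaFnExt : ℕ → ℂ → ℂ
  | 0, ξ => ξ / (1 - ξ)
  | l + 1, ξ => gammaFn (l + 1) ξ

lemma gammaFnExt_of_one_le {l : ℕ} (hl : 1 ≤ l) : gammaFnExt l = gammaFn l := by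
  obtain ⟨m, rfl⟩ := Nat.exists_eq_add_of_le' hl
  rfl

lemma hasDerivAt_gammaFnExt {l : ℕ} (hl : l ≤ 4) {ξ : ℂ} (hξ0 : ξ ≠ 0) (hξ1 : ξ ≠ 1) :
    HasDerivAt (gammaFnExt l) (gammaFnExt (l + 1) ξ / ξ) ξ := by
  have hne : 1 - ξ ≠ 0 := sub_ne_zero.mpr hξ1.symm
  have hX := hasDerivAt_id' ξ
  have hden (n : ℕ) : HasDerivAt (fun x : ℂ => (1 - x) ^ n) (n * (1 - ξ) ^ (n - 1) * -1) ξ :=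
    (hX.const_sub 1).pow n
  have hX2 := hasDerivAt_pow 2 ξ
  have hX3 := hasDerivAt_pow 3 ξ
  have hX4 := hasDerivAt_pow 4 ξ
  interval_cases l
  · exact (hX.div (hX.const_sub 1) hne).congr_deriv
      (by simp only [gammaFnExt, gammaFn]; field_simp; ring)
  · exact (hX.div (hden 2) (pow_ne_zero 2 hne)).congr_deriv
      (by simp only [gammaFnExt, gammaFn]; field_simp; ring)
  · exact ((hX.add hX2).div (hden 3) (pow_ne_zero 3 hne)).congr_deriv
      (by simp only [gammaFnExt, gammaFn, Pi.add_apply]; field_simp; ring)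
  · exact (((hX.add (hX2.const_mul 4)).add hX3).div (hden 4) (pow_ne_zero 4 hne)).congr_deriv
      (by simp only [gammaFnExt, gammaFn, Pi.add_apply]; field_simp; ring)
  · exact ((((hX.add (hX2.const_mul 11)).add (hX3.const_mul 11)).add hX4).div
      (hden 5) (pow_ne_zero 5 hne)).congr_deriv
      (by simp only [gammaFnExt, gammaFn, Pi.add_apply]; field_simp; ring)

lemma hasDerivAt_gammaFnExt_exp_neg {l : ℕ} (hl : l ≤ 4) {w : ℂ} (hw : Complex.exp (-w) ≠ 1) :
    HasDerivAt (fun x => gammaFnExt l (Complex.exp (-x)))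
      (-gammaFnExt (l + 1) (Complex.exp (-w))) w := by
  have := (hasDerivAt_gammaFnExt hl (Complex.exp_ne_zero _) hw).comp w (hasDerivAt_neg w).cexp
  exact this.congr_deriv (by field_simp [Complex.exp_ne_zero])

lemma Complex.exp_ne_one_of_norm_lt_two_pi {w : ℂ} (hw0 : w ≠ 0) (hw : ‖w‖ < 2 * π) :
    Complex.exp w ≠ 1 := by
  rw [Ne, Complex.exp_eq_one_iff]
  rintro ⟨n, rfl⟩
  have hn : n ≠ 0 := by rintro rfl; simp at hw0
  have h1 : (1 : ℝ) ≤ |(n : ℝ)| := by exact_mod_cast Int.one_le_abs hn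
  have : ‖(n : ℂ) * (2 * π * Complex.I)‖ = |(n : ℝ)| * (2 * π) := by
    simp [abs_of_pos pi_pos]
  nlinarith [pi_pos]

lemma dslope_exp_zero_ne_zero {w : ℂ} (hw : ‖w‖ < 2 * π) : dslope Complex.exp 0 w ≠ 0 := by
  rcases eq_or_ne w 0 with rfl | hw0
  · simp [dslope_same]
  · rw [dslope_of_ne _ hw0, slope_def_field]
    have hexp := Complex.exp_ne_one_of_norm_lt_two_pi hw0 hw
    exact div_ne_zero (sub_ne_zero.mpr (by simpa using hexp)) (by simpa using hw0)

/-- `1 / (e^w - 1) - 1 / w` written as `-((g w - 1) / w) / g w` with `g w = (e^w - 1) / w`,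
so that the removable singularity at `0` is filled by `dslope`. -/
noncomputable def invExpSubOneReg (w : ℂ) : ℂ :=
  -dslope (dslope Complex.exp 0) 0 w / dslope Complex.exp 0 w

lemma invExpSubOneReg_eq {w : ℂ} (hw : Complex.exp w ≠ 1) :
    invExpSubOneReg w = (Complex.exp w - 1)⁻¹ - w⁻¹ := by
  have hw0 : w ≠ 0 := by rintro rfl; simp at hw
  have hw1 : Complex.exp w - 1 ≠ 0 := sub_ne_zero.mpr hw
  simp only [invExpSubOneReg, dslope_of_ne _ hw0, slope_def_field, dslope_same,
    Complex.deriv_exp, Complex.exp_zero, sub_zero]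
  field_simp
  ring

lemma differentiableOn_invExpSubOneReg :
    DifferentiableOn ℂ invExpSubOneReg (ball 0 (2 * π)) := by
  have hg : Differentiable ℂ (dslope Complex.exp 0) := by
    rw [← differentiableOn_univ, Complex.differentiableOn_dslope Filter.univ_mem]
    exact Complex.differentiable_exp.differentiableOn
  have hh : Differentiable ℂ (dslope (dslope Complex.exp 0) 0) := by
    rw [← differentiableOn_univ, Complex.differentiableOn_dslope Filter.univ_mem]
    exact hg.differentiableOn
  exact (hh.neg.differentiableOn).div hg.differentiableOn
    fun w hw => dslope_exp_zero_ne_zero (mem_ball_zero_iff.mp hw)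

lemma iteratedDeriv_invExpSubOneReg {l : ℕ} (hl : l ≤ 5) {w : ℂ} (hw0 : w ≠ 0)
    (hw : ‖w‖ < 2 * π) :
    iteratedDeriv l invExpSubOneReg w =
      (-1) ^ l * (gammaFnExt l (Complex.exp (-w)) - l ! * (w ^ (l + 1))⁻¹) := by
  induction l generalizing w with
  | zero =>
    have hexp := Complex.exp_ne_one_of_norm_lt_two_pi hw0 hw
    have hne : Complex.exp w - 1 ≠ 0 := sub_ne_zero.mpr hexp
    rw [iteratedDeriv_zero, invExpSubOneReg_eq hexp, Complex.exp_neg]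
    simp only [gammaFnExt]
    field_simp
    ring
  | succ n ih =>
    have hU : IsOpen ((ball (0 : ℂ) (2 * π)) \ {0}) := isOpen_ball.sdiff isClosed_singleton
    have hev : iteratedDeriv n invExpSubOneReg =ᶠ[nhds w]
        fun x => (-1) ^ n * (gammaFnExt n (Complex.exp (-x)) - n ! * (x ^ (n + 1))⁻¹) := by
      filter_upwards [hU.mem_nhds ⟨mem_ball_zero_iff.mpr hw, hw0⟩] with x ⟨hx, hx0⟩
      exact ih (by omega) hx0 (mem_ball_zero_iff.mp hx)
    have hexp : Complex.exp (-w) ≠ 1 :=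
      Complex.exp_ne_one_of_norm_lt_two_pi (neg_ne_zero.mpr hw0) (by rwa [norm_neg])
    have hpow : HasDerivAt (fun x : ℂ => (x ^ (n + 1))⁻¹)
        (-((n + 1) * w ^ n) / (w ^ (n + 1)) ^ 2) w := by
      simpa [Pi.inv_def] using (hasDerivAt_pow (n + 1) w).inv (pow_ne_zero _ hw0)
    have hd := (((hasDerivAt_gammaFnExt_exp_neg (l := n) (by omega) hexp).sub
      (hpow.const_mul (n ! : ℂ)))).const_mul ((-1 : ℂ) ^ n)
    rw [iteratedDeriv_succ, hev.deriv_eq]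
    refine hd.deriv.trans ?_
    rw [Nat.factorial_succ]
    push_cast
    field_simp
    ring

lemma exists_bound_gammaFnExt_sub {l : ℕ} (hl : l ≤ 5) {R : ℝ} (hR : R < 2 * π) :
    ∃ C > 0, ∀ w : ℂ, w ≠ 0 → ‖w‖ ≤ R →
      ‖gammaFnExt l (Complex.exp (-w)) - l ! * (w ^ (l + 1))⁻¹‖ ≤ C := by
  have hcont : ContinuousOn (iteratedDeriv l invExpSubOneReg) (closedBall 0 R) := by
    have := (differentiableOn_invExpSubOneReg.analyticOnNhd isOpen_ball).iterated_deriv l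
    rw [← iteratedDeriv_eq_iterate] at this
    exact this.continuousOn.mono (closedBall_subset_ball hR)
  obtain ⟨C, hC⟩ := (isCompact_closedBall 0 R).exists_bound_of_continuousOn hcont
  refine ⟨max C 1, by positivity, fun w hw0 hwR => le_max_of_le_left ?_⟩
  have := hC w (mem_closedBall_zero_iff.mpr hwR)
  rwa [iteratedDeriv_invExpSubOneReg hl hw0 (hwR.trans_lt hR), norm_mul, norm_pow, norm_neg,
    norm_one, one_pow, one_mul] at this

lemma norm_mem_Icc_of_mem_contourTrunc {θ κ τ : ℝ} (hκ : 0 ≤ κ) (hτθ : 0 < τ * sin θ)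
    (hκτ : κ * τ * sin θ ≤ π) {z : ℂ} (hz : z ∈ contourTrunc θ κ τ) :
    ‖z‖ ∈ Set.Icc κ (π / (τ * sin θ)) := by
  rcases hz with ⟨hzκ, -⟩ | ⟨r, hκr, hrπ, hz⟩
  · rw [hzκ, Set.mem_Icc, le_div_iff₀ hτθ, ← mul_assoc]
    exact ⟨le_rfl, hκτ⟩
  · have hzr : ‖z‖ = r := by
      rcases hz with rfl | rfl <;> simp [Complex.norm_exp, abs_of_nonneg (hκ.trans hκr)]
    exact hzr ▸ ⟨hκr, hrπ⟩

lemma half_lt_sin_of_mem_Ioc {θ : ℝ} (hθ : θ ∈ Set.Ioc (π / 2) (2 * π / 3)) : 1 / 2 < sin θ := by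
  rw [← sin_pi_sub, ← sin_pi_div_six]
  obtain ⟨hθ1, hθ2⟩ := hθ
  exact strictMonoOn_sin ⟨by linarith [pi_pos], by linarith⟩ ⟨by linarith, by linarith⟩
    (by linarith)

/-- For 1 ≤ l ≤ 5 and κ > 0: |(γ_l(e^{−zτ})/l!)·τ^{l+1} − z^{−(l+1)}| ≤ c·τ^{l+1}
on Γ^τ_{θ,κ}. -/
theorem gammaFn_weight_error (l : ℕ) (hl1 : 1 ≤ l) (hl5 : l ≤ 5) (κ : ℝ) (hκ : 0 < κ) :
    ∃ θ₀ ∈ Set.Ioo (π / 2) π, ∀ θ ∈ Set.Ioc (π / 2) θ₀,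
      ∃ c > (0 : ℝ), ∀ τ : ℝ, 0 < τ → κ * τ * Real.sin θ ≤ π →
        ∀ z ∈ contourTrunc θ κ τ,
          ‖gammaFn l (Complex.exp (-z * (τ : ℂ))) / (Nat.factorial l : ℂ)
                * (τ : ℂ) ^ (l + 1) - (z ^ (l + 1))⁻¹‖
            ≤ c * τ ^ (l + 1) := by
  refine ⟨2 * π / 3, ⟨by linarith [pi_pos], by linarith [pi_pos]⟩, fun θ hθ => ?_⟩
  have hsin := half_lt_sin_of_mem_Ioc hθ
  have hR : π / sin θ < 2 * π := by rw [div_lt_iff₀ (by linarith)]; nlinarith [pi_pos]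
  obtain ⟨C, hC, hbound⟩ := exists_bound_gammaFnExt_sub hl5 hR
  refine ⟨C / l !, by positivity, fun τ hτ hκτ z hz => ?_⟩
  obtain ⟨hκz, hzτ⟩ := norm_mem_Icc_of_mem_contourTrunc hκ.le (by positivity) hκτ hz
  have hz0 : z ≠ 0 := norm_pos_iff.mp (hκ.trans_le hκz)
  have hτ0 : (τ : ℂ) ≠ 0 := by exact_mod_cast hτ.ne'
  have hw : ‖z * τ‖ ≤ π / sin θ := by
    rwa [norm_mul, Complex.norm_real, norm_of_nonneg hτ.le, ← le_div_iff₀ hτ, div_div, mul_comm]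
  have hscale : gammaFn l (Complex.exp (-z * τ)) / l ! * (τ : ℂ) ^ (l + 1) - (z ^ (l + 1))⁻¹ =
      (τ : ℂ) ^ (l + 1) / l ! *
        (gammaFnExt l (Complex.exp (-(z * τ))) - l ! * ((z * τ) ^ (l + 1))⁻¹) := by
    have hfac : (l ! : ℂ) ≠ 0 := by exact_mod_cast l.factorial_ne_zero
    rw [gammaFnExt_of_one_le hl1, neg_mul, mul_pow]
    field_simp
  rw [hscale, norm_mul, norm_div, norm_pow, Complex.norm_real, norm_of_nonneg hτ.le,
    Complex.norm_natCast]
  calc τ ^ (l + 1) / l ! * ‖gammaFnExt l (Complex.exp (-(z * τ))) - l ! * ((z * τ) ^ (l + 1))⁻¹‖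
      ≤ τ ^ (l + 1) / l ! * C := by gcongr; exact hbound _ (mul_ne_zero hz0 hτ0) hw
    _ = C / l ! * τ ^ (l + 1) := by ring
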